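/- Let Γ, δ ∈ ℂ with Γ·conj(δ) ≠ δ·conj(Γ), set α = conj(Γ)/(Γ·conj(δ) − δ·conj(Γ)) and β = conj(δ)/(Γ·conj(δ) − δ·conj(Γ)), and let ω₊ ∈ ℂ be nonzero with ω₋ = conj(ω₊). Then for every smooth f : ℝ² → ℂ: (a₊b₊ − b₊a₊) f = f and (a₋b₋ − b₋a₋) f = f, while all mixed commutators vanish: (a₊a₋ − a₋a₊) f = (a₊b₋ − b₋a₊) f = (b₊a₋ − a₋b₊) f = (b₊b₋ − b₋b₊) f = 0. -/

import Mathlib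

open MeasureTheory

/-- Partial derivative in the `x`-direction of a function on `ℝ²`. -/
noncomputable def pdx (f : ℝ × ℝ → ℂ) : ℝ × ℝ → ℂ := fun p => fderiv ℝ f p (1, 0)

/-- Partial derivative in the `y`-direction of a function on `ℝ²`. -/
noncomputable def pdy (f : ℝ × ℝ → ℂ) : ℝ × ℝ → ℂ := fun p => fderiv ℝ f p (0, 1)

/-- `α = conj(Γ)/(Γ conj(δ) − δ conj(Γ))`. -/
noncomputable def alphaDHO (Γ δ : ℂ) : ℂ :=
  (starRingEnd ℂ) Γ / (Γ * (starRingEnd ℂ) δ - δ * (starRingEnd ℂ) Γ)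

/-- `β = conj(δ)/(Γ conj(δ) − δ conj(Γ))`. -/
noncomputable def betaDHO (Γ δ : ℂ) : ℂ :=
  (starRingEnd ℂ) δ / (Γ * (starRingEnd ℂ) δ - δ * (starRingEnd ℂ) Γ)

/-- `a f = √(ω/2)·[(βx + i(δ/ω)y) f + (Γ/ω) ∂ₓ f − iα ∂_y f]`, with the principal branch
of the complex square root (`cpow`).  Taking the parameters `(Γ, δ, ω₊)` gives `a₊`; taking
the conjugated parameters `(conj Γ, conj δ, ω₋)` gives `a₋`. -/
noncomputable def aDHO (Γ δ ω : ℂ) (f : ℝ × ℝ → ℂ) : ℝ × ℝ → ℂ := fun p =>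
  (ω / 2) ^ ((1 : ℂ) / 2) *
    ((betaDHO Γ δ * (p.1 : ℂ) + Complex.I * (δ / ω) * (p.2 : ℂ)) * f p +
      (Γ / ω) * pdx f p - Complex.I * alphaDHO Γ δ * pdy f p)

/-- `b f = √(ω/2)·[(βx − i(δ/ω)y) f − (Γ/ω) ∂ₓ f − iα ∂_y f]`, with the principal branch
of the complex square root (`cpow`).  Taking the parameters `(Γ, δ, ω₊)` gives `b₊`; taking
the conjugated parameters `(conj Γ, conj δ, ω₋)` gives `b₋`. -/
noncomputable def bDHO (Γ δ ω : ℂ) (f : ℝ × ℝ → ℂ) : ℝ × ℝ → ℂ := fun p =>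
  (ω / 2) ^ ((1 : ℂ) / 2) *
    ((betaDHO Γ δ * (p.1 : ℂ) - Complex.I * (δ / ω) * (p.2 : ℂ)) * f p -
      (Γ / ω) * pdx f p - Complex.I * alphaDHO Γ δ * pdy f p)

noncomputable def opgen (c m n u v : ℂ) (f : ℝ × ℝ → ℂ) : ℝ × ℝ → ℂ :=
  fun q => c * ((m * (q.1 : ℂ) + n * (q.2 : ℂ)) * f q + u * pdx f q + v * pdy f q)

section
variable {f : ℝ × ℝ → ℂ}

lemma hdf (hf : ContDiff ℝ (⊤ : ℕ∞) f) : Differentiable ℝ f := hf.differentiable (by simp)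

lemma hdf' (hf : ContDiff ℝ (⊤ : ℕ∞) f) : ContDiff ℝ (⊤ : ℕ∞) (fderiv ℝ f) :=
  hf.fderiv_right (by simp)

lemma hasFDerivAt_pd (hf : ContDiff ℝ (⊤ : ℕ∞) f) (w : ℝ × ℝ) (p : ℝ × ℝ) :
    HasFDerivAt (fun q => fderiv ℝ f q w)
      ((ContinuousLinearMap.apply ℝ ℂ w).comp (fderiv ℝ (fderiv ℝ f) p)) p :=
  (ContinuousLinearMap.apply ℝ ℂ w).hasFDerivAt.comp p
    ((hdf' hf).differentiable (by simp) p).hasFDerivAt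

lemma clairaut (hf : ContDiff ℝ (⊤ : ℕ∞) f) (p v w : ℝ × ℝ) :
    fderiv ℝ (fderiv ℝ f) p v w = fderiv ℝ (fderiv ℝ f) p w v :=
  second_derivative_symmetric (fun y => (hdf hf y).hasFDerivAt)
    (((hdf' hf).differentiable (by simp) p).hasFDerivAt) v w

lemma fderiv_opgen (hf : ContDiff ℝ (⊤ : ℕ∞) f) (c m n u v : ℂ) (p w : ℝ × ℝ) :
    fderiv ℝ (opgen c m n u v f) p w
      = c * ((m * (w.1 : ℂ) + n * (w.2 : ℂ)) * f p
          + (m * (p.1 : ℂ) + n * (p.2 : ℂ)) * fderiv ℝ f p w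
          + u * fderiv ℝ (fderiv ℝ f) p w (1,0)
          + v * fderiv ℝ (fderiv ℝ f) p w (0,1)) := by
  have hL : HasFDerivAt (fun q : ℝ × ℝ => m * (q.1 : ℂ) + n * (q.2 : ℂ))
      (m • (Complex.ofRealCLM.comp (ContinuousLinearMap.fst ℝ ℝ ℝ))
        + n • (Complex.ofRealCLM.comp (ContinuousLinearMap.snd ℝ ℝ ℝ))) p := by
    have h := (m • (Complex.ofRealCLM.comp (ContinuousLinearMap.fst ℝ ℝ ℝ))
        + n • (Complex.ofRealCLM.comp (ContinuousLinearMap.snd ℝ ℝ ℝ))).hasFDerivAt (x := p)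
    have he : (fun q : ℝ × ℝ => m * (q.1 : ℂ) + n * (q.2 : ℂ))
        = ⇑(m • (Complex.ofRealCLM.comp (ContinuousLinearMap.fst ℝ ℝ ℝ))
        + n • (Complex.ofRealCLM.comp (ContinuousLinearMap.snd ℝ ℝ ℝ))) := by
      funext q; simp [smul_eq_mul]
    rw [he]; exact h
  have h1 : HasFDerivAt (fun q : ℝ × ℝ => (m * (q.1:ℂ) + n * (q.2:ℂ)) * f q)
      (((m * (p.1:ℂ) + n * (p.2:ℂ))) • fderiv ℝ f p + (f p) •
        (m • (Complex.ofRealCLM.comp (ContinuousLinearMap.fst ℝ ℝ ℝ))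
        + n • (Complex.ofRealCLM.comp (ContinuousLinearMap.snd ℝ ℝ ℝ)))) p :=
    hL.mul (hdf hf p).hasFDerivAt
  have h2 : HasFDerivAt (fun q => u * pdx f q)
      (u • ((ContinuousLinearMap.apply ℝ ℂ ((1:ℝ),(0:ℝ))).comp (fderiv ℝ (fderiv ℝ f) p))) p :=
    (hasFDerivAt_pd hf _ p).const_mul u
  have h3 : HasFDerivAt (fun q => v * pdy f q)
      (v • ((ContinuousLinearMap.apply ℝ ℂ ((0:ℝ),(1:ℝ))).comp (fderiv ℝ (fderiv ℝ f) p))) p :=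
    (hasFDerivAt_pd hf _ p).const_mul v
  have H := (((h1.add h2).add h3).const_mul c).fderiv
  have : opgen c m n u v f = fun q => c * ((m * (q.1:ℂ) + n * (q.2:ℂ)) * f q
      + u * pdx f q + v * pdy f q) := rfl
  rw [this]; erw [H]
  simp [smul_eq_mul, pdx, pdy]
  ring

lemma contDiff_pd (hf : ContDiff ℝ (⊤ : ℕ∞) f) (w : ℝ × ℝ) :
    ContDiff ℝ (⊤ : ℕ∞) (fun q => fderiv ℝ f q w) :=
  (ContinuousLinearMap.apply ℝ ℂ w).contDiff.comp (hdf' hf)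

lemma contDiff_opgen (hf : ContDiff ℝ (⊤ : ℕ∞) f) (c m n u v : ℂ) :
    ContDiff ℝ (⊤ : ℕ∞) (opgen c m n u v f) := by
  unfold opgen pdx pdy
  exact contDiff_const.mul
    (((((contDiff_const.mul (Complex.ofRealCLM.contDiff.comp contDiff_fst)).add
      (contDiff_const.mul (Complex.ofRealCLM.contDiff.comp contDiff_snd))).mul hf).add
      (contDiff_const.mul (contDiff_pd hf _))).add
      (contDiff_const.mul (contDiff_pd hf _)))

lemma comm_opgen (hf : ContDiff ℝ (⊤ : ℕ∞) f) (c m n u v c' m' n' u' v' : ℂ) (p : ℝ × ℝ) :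
    opgen c m n u v (opgen c' m' n' u' v' f) p
      - opgen c' m' n' u' v' (opgen c m n u v f) p
      = (c * c' * (u * m' + v * n' - u' * m - v' * n)) * f p := by
  have h1 := fderiv_opgen hf c' m' n' u' v' p ((1:ℝ),(0:ℝ))
  have h2 := fderiv_opgen hf c' m' n' u' v' p ((0:ℝ),(1:ℝ))
  have h3 := fderiv_opgen hf c m n u v p ((1:ℝ),(0:ℝ))
  have h4 := fderiv_opgen hf c m n u v p ((0:ℝ),(1:ℝ))
  have hsym := clairaut hf p ((1:ℝ),(0:ℝ)) ((0:ℝ),(1:ℝ))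
  norm_num at h1 h2 h3 h4
  show c * ((m * (p.1:ℂ) + n * (p.2:ℂ)) * opgen c' m' n' u' v' f p
      + u * fderiv ℝ (opgen c' m' n' u' v' f) p (1,0)
      + v * fderiv ℝ (opgen c' m' n' u' v' f) p (0,1))
    - c' * ((m' * (p.1:ℂ) + n' * (p.2:ℂ)) * opgen c m n u v f p
      + u' * fderiv ℝ (opgen c m n u v f) p (1,0)
      + v' * fderiv ℝ (opgen c m n u v f) p (0,1)) = _
  rw [h1, h2, h3, h4, hsym]
  show c * ((m * (p.1:ℂ) + n * (p.2:ℂ)) * (c' * ((m' * (p.1:ℂ) + n' * (p.2:ℂ)) * f p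
      + u' * fderiv ℝ f p (1,0) + v' * fderiv ℝ f p (0,1))) + _ + _)
    - c' * ((m' * (p.1:ℂ) + n' * (p.2:ℂ)) * (c * ((m * (p.1:ℂ) + n * (p.2:ℂ)) * f p
      + u * fderiv ℝ f p (1,0) + v * fderiv ℝ f p (0,1))) + _ + _) = _
  ring

lemma aDHO_eq (Γ δ ω : ℂ) :
    aDHO Γ δ ω f = opgen ((ω / 2) ^ ((1:ℂ)/2)) (betaDHO Γ δ) (Complex.I * (δ / ω))
      (Γ / ω) (-(Complex.I * alphaDHO Γ δ)) f := by
  funext p; simp only [aDHO, opgen]; ring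

lemma bDHO_eq (Γ δ ω : ℂ) :
    bDHO Γ δ ω f = opgen ((ω / 2) ^ ((1:ℂ)/2)) (betaDHO Γ δ) (-(Complex.I * (δ / ω)))
      (-(Γ / ω)) (-(Complex.I * alphaDHO Γ δ)) f := by
  funext p; simp only [bDHO, opgen]; ring

lemma comm_opgen_one (hf : ContDiff ℝ (⊤ : ℕ∞) f) (c m n u v c' m' n' u' v' : ℂ)
    (h : c * c' * (u * m' + v * n' - u' * m - v' * n) = 1) :
    opgen c m n u v (opgen c' m' n' u' v' f)
      - opgen c' m' n' u' v' (opgen c m n u v f) = f := by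
  funext p
  show opgen c m n u v (opgen c' m' n' u' v' f) p
      - opgen c' m' n' u' v' (opgen c m n u v f) p = f p
  rw [comm_opgen hf, h, one_mul]

lemma comm_opgen_zero (hf : ContDiff ℝ (⊤ : ℕ∞) f) (c m n u v c' m' n' u' v' : ℂ)
    (h : u * m' + v * n' - u' * m - v' * n = 0) :
    opgen c m n u v (opgen c' m' n' u' v' f)
      - opgen c' m' n' u' v' (opgen c m n u v f) = 0 := by
  funext p
  show opgen c m n u v (opgen c' m' n' u' v' f) p
      - opgen c' m' n' u' v' (opgen c m n u v f) p = 0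
  rw [comm_opgen hf, h, mul_zero, zero_mul]

end

theorem statement17 (Γ δ ω : ℂ)
    (hΓδ : Γ * (starRingEnd ℂ) δ ≠ δ * (starRingEnd ℂ) Γ) (hω : ω ≠ 0)
    (f : ℝ × ℝ → ℂ) (hf : ContDiff ℝ (⊤ : ℕ∞) f) :
    (aDHO Γ δ ω (bDHO Γ δ ω f) - bDHO Γ δ ω (aDHO Γ δ ω f) = f) ∧
    (aDHO ((starRingEnd ℂ) Γ) ((starRingEnd ℂ) δ) ((starRingEnd ℂ) ω)
        (bDHO ((starRingEnd ℂ) Γ) ((starRingEnd ℂ) δ) ((starRingEnd ℂ) ω) f) -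
      bDHO ((starRingEnd ℂ) Γ) ((starRingEnd ℂ) δ) ((starRingEnd ℂ) ω)
        (aDHO ((starRingEnd ℂ) Γ) ((starRingEnd ℂ) δ) ((starRingEnd ℂ) ω) f) = f) ∧
    (aDHO Γ δ ω (aDHO ((starRingEnd ℂ) Γ) ((starRingEnd ℂ) δ) ((starRingEnd ℂ) ω) f) -
      aDHO ((starRingEnd ℂ) Γ) ((starRingEnd ℂ) δ) ((starRingEnd ℂ) ω)
        (aDHO Γ δ ω f) = 0) ∧
    (aDHO Γ δ ω (bDHO ((starRingEnd ℂ) Γ) ((starRingEnd ℂ) δ) ((starRingEnd ℂ) ω) f) -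
      bDHO ((starRingEnd ℂ) Γ) ((starRingEnd ℂ) δ) ((starRingEnd ℂ) ω)
        (aDHO Γ δ ω f) = 0) ∧
    (bDHO Γ δ ω (aDHO ((starRingEnd ℂ) Γ) ((starRingEnd ℂ) δ) ((starRingEnd ℂ) ω) f) -
      aDHO ((starRingEnd ℂ) Γ) ((starRingEnd ℂ) δ) ((starRingEnd ℂ) ω)
        (bDHO Γ δ ω f) = 0) ∧
    (bDHO Γ δ ω (bDHO ((starRingEnd ℂ) Γ) ((starRingEnd ℂ) δ) ((starRingEnd ℂ) ω) f) -
      bDHO ((starRingEnd ℂ) Γ) ((starRingEnd ℂ) δ) ((starRingEnd ℂ) ω)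
        (bDHO Γ δ ω f) = 0) := by
  have hD : Γ * (starRingEnd ℂ) δ - δ * (starRingEnd ℂ) Γ ≠ 0 := sub_ne_zero.mpr hΓδ
  have hD' : (starRingEnd ℂ) Γ * δ - (starRingEnd ℂ) δ * Γ ≠ 0 := by
    intro h
    apply hD
    have := congrArg (starRingEnd ℂ) h
    simpa [map_sub, map_mul] using this
  have hω' : (starRingEnd ℂ) ω ≠ 0 := by simpa using hω
  have hc : (ω / 2) ^ ((1:ℂ)/2) * (ω / 2) ^ ((1:ℂ)/2) = ω / 2 := by
    rw [← Complex.cpow_add _ _ (div_ne_zero hω two_ne_zero)]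
    norm_num
  have hc' : ((starRingEnd ℂ) ω / 2) ^ ((1:ℂ)/2) * ((starRingEnd ℂ) ω / 2) ^ ((1:ℂ)/2)
      = (starRingEnd ℂ) ω / 2 := by
    rw [← Complex.cpow_add _ _ (div_ne_zero hω' two_ne_zero)]
    norm_num
  have hI : Complex.I * Complex.I = -1 := Complex.I_mul_I
  have hW : ω * ω⁻¹ = 1 := mul_inv_cancel₀ hω
  have hW' : (starRingEnd ℂ) ω * ((starRingEnd ℂ) ω)⁻¹ = 1 := mul_inv_cancel₀ hω'
  have hDd : (Γ * (starRingEnd ℂ) δ - δ * (starRingEnd ℂ) Γ)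
      * (Γ * (starRingEnd ℂ) δ - δ * (starRingEnd ℂ) Γ)⁻¹ = 1 := mul_inv_cancel₀ hD
  have hDd' : ((starRingEnd ℂ) Γ * δ - (starRingEnd ℂ) δ * Γ)
      * ((starRingEnd ℂ) Γ * δ - (starRingEnd ℂ) δ * Γ)⁻¹ = 1 := mul_inv_cancel₀ hD'
  refine ⟨?_, ?_, ?_, ?_, ?_, ?_⟩
  · simp only [aDHO_eq, bDHO_eq]
    refine comm_opgen_one hf _ _ _ _ _ _ _ _ _ _ ?_
    rw [hc]
    unfold alphaDHO betaDHO
    linear_combination (ω * ω⁻¹ * (Γ * (starRingEnd ℂ) δ - δ * (starRingEnd ℂ) Γ)⁻¹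
        * (starRingEnd ℂ) Γ * δ) * hI + (ω * ω⁻¹) * hDd + hW
  · simp only [aDHO_eq, bDHO_eq]
    refine comm_opgen_one hf _ _ _ _ _ _ _ _ _ _ ?_
    rw [hc']
    unfold alphaDHO betaDHO
    simp only [Complex.conj_conj]
    linear_combination ((starRingEnd ℂ) ω * ((starRingEnd ℂ) ω)⁻¹
        * ((starRingEnd ℂ) Γ * δ - (starRingEnd ℂ) δ * Γ)⁻¹
        * Γ * (starRingEnd ℂ) δ) * hI + ((starRingEnd ℂ) ω * ((starRingEnd ℂ) ω)⁻¹) * hDd' + hW'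
  · simp only [aDHO_eq, bDHO_eq]
    refine comm_opgen_zero hf _ _ _ _ _ _ _ _ _ _ ?_
    unfold alphaDHO betaDHO
    simp only [Complex.conj_conj]
    linear_combination (Γ * δ * ω⁻¹ * ((starRingEnd ℂ) Γ * δ - (starRingEnd ℂ) δ * Γ)⁻¹
        - (starRingEnd ℂ) Γ * (starRingEnd ℂ) δ * ((starRingEnd ℂ) ω)⁻¹ * (Γ * (starRingEnd ℂ) δ - δ * (starRingEnd ℂ) Γ)⁻¹) * hI
  · simp only [aDHO_eq, bDHO_eq]
    refine comm_opgen_zero hf _ _ _ _ _ _ _ _ _ _ ?_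
    unfold alphaDHO betaDHO
    simp only [Complex.conj_conj]
    linear_combination (Γ * δ * ω⁻¹ * ((starRingEnd ℂ) Γ * δ - (starRingEnd ℂ) δ * Γ)⁻¹
        + (starRingEnd ℂ) Γ * (starRingEnd ℂ) δ * ((starRingEnd ℂ) ω)⁻¹ * (Γ * (starRingEnd ℂ) δ - δ * (starRingEnd ℂ) Γ)⁻¹) * hI
  · simp only [aDHO_eq, bDHO_eq]
    refine comm_opgen_zero hf _ _ _ _ _ _ _ _ _ _ ?_
    unfold alphaDHO betaDHO
    simp only [Complex.conj_conj]
    linear_combination (- (Γ * δ * ω⁻¹ * ((starRingEnd ℂ) Γ * δ - (starRingEnd ℂ) δ * Γ)⁻¹)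
        - (starRingEnd ℂ) Γ * (starRingEnd ℂ) δ * ((starRingEnd ℂ) ω)⁻¹ * (Γ * (starRingEnd ℂ) δ - δ * (starRingEnd ℂ) Γ)⁻¹) * hI
  · simp only [aDHO_eq, bDHO_eq]
    refine comm_opgen_zero hf _ _ _ _ _ _ _ _ _ _ ?_
    unfold alphaDHO betaDHO
    simp only [Complex.conj_conj]
    linear_combination (- (Γ * δ * ω⁻¹ * ((starRingEnd ℂ) Γ * δ - (starRingEnd ℂ) δ * Γ)⁻¹)
        + (starRingEnd ℂ) Γ * (starRingEnd ℂ) δ * ((starRingEnd ℂ) ω)⁻¹ * (Γ * (starRingEnd ℂ) δ - δ * (starRingEnd ℂ) Γ)⁻¹) * hI
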